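/- Let n ≥ 3 be an integer and p an odd prime with p > n. Let J be the n×n matrix over ZMod p with J·e_i = e_{i+1} for 1 ≤ i < n and J·e_n = 0, and let P = 1 + J and Q = 1 + J + J², viewed as elements of GL_n(ZMod p). Form the semidirect product G = V ⋊ GL_n(ZMod p), where V is the additive group (ZMod p)^n (written multiplicatively) and GL_n(ZMod p) acts by matrix–vector multiplication. Let A be the subgroup of G generated by inl(e_1) and inr(P), and B the subgroup generated by inl(e_1) and inr(Q), where inl : V → G and inr : GL_n(ZMod p) → G are the canonical injections. Then A ⊓ B equals the image of inl (the embedded copy of V). -/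

import Mathlib

open Matrix

/-- The `n × n` nilpotent Jordan block over a ring `R`: `J e_i = e_{i+1}` for `i < n`
and `J e_n = 0`, i.e. the matrix with ones on the subdiagonal and zeros elsewhere. -/
def jordanJ (n : ℕ) (R : Type) [Ring R] : Matrix (Fin n) (Fin n) R :=
  Matrix.of fun i j => if (i : ℕ) = (j : ℕ) + 1 then 1 else 0

/-- The natural action of `GL n R` on the (multiplicatively written) additive group
`Rⁿ` by matrix-vector multiplication, as a homomorphism to the automorphism group. -/
def glPhi (n : ℕ) (R : Type) [CommRing R] :
    GL (Fin n) R →* MulAut (Multiplicative (Fin n → R)) where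
  toFun g :=
    { toFun := fun v => Multiplicative.ofAdd (g.val.mulVec v.toAdd)
      invFun := fun v => Multiplicative.ofAdd (g.inv.mulVec v.toAdd)
      left_inv := fun v => by
        simp [Matrix.mulVec_mulVec, g.inv_val, Matrix.one_mulVec]
      right_inv := fun v => by
        simp [Matrix.mulVec_mulVec, g.val_inv, Matrix.one_mulVec]
      map_mul' := fun u v => by
        simp [Matrix.mulVec_add, ofAdd_add] }
  map_one' := by
    ext v
    simp [Matrix.one_mulVec]
  map_mul' g h := by
    ext v
    simp [Matrix.mulVec_mulVec]

open Polynomial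

lemma jordanJ_pow_apply (n : ℕ) (R : Type) [Ring R] (m : ℕ) (i j : Fin n) :
    (jordanJ n R ^ m) i j = if (i : ℕ) = (j : ℕ) + m then 1 else 0 := by
  induction m generalizing j with
  | zero =>
    simp [Matrix.one_apply, Fin.ext_iff]
  | succ m ih =>
    rw [pow_succ, Matrix.mul_apply]
    by_cases hj : (j : ℕ) + 1 < n
    · rw [Finset.sum_eq_single (⟨(j : ℕ) + 1, hj⟩ : Fin n)]
      · have : jordanJ n R ⟨(j : ℕ) + 1, hj⟩ j = 1 := by
          simp [jordanJ]
        rw [this, mul_one, ih]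
        have h2 : (j : ℕ) + 1 + m = (j : ℕ) + (m + 1) := by omega
        rw [h2]
      · intro k _ hk
        have : jordanJ n R k j = 0 := by
          simp only [jordanJ, Matrix.of_apply, ite_eq_right_iff]
          intro h
          exact absurd (Fin.ext h : k = ⟨(j : ℕ) + 1, hj⟩) hk
        rw [this, mul_zero]
      · simp
    · rw [Finset.sum_eq_zero, if_neg (by omega)]
      intro k _
      have : jordanJ n R k j = 0 := by
        simp only [jordanJ, Matrix.of_apply, ite_eq_right_iff]
        intro h
        omega
      rw [this, mul_zero]

lemma jordanJ_pow_eq_zero (n : ℕ) (R : Type) [Ring R] (m : ℕ) (hm : n ≤ m) :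
    jordanJ n R ^ m = 0 := by
  ext i j
  rw [jordanJ_pow_apply]
  have : ¬ ((i : ℕ) = (j : ℕ) + m) := by omega
  simp [this]

lemma aeval_jordanJ_apply (n : ℕ) (R : Type) [CommRing R] (f : R[X]) (i : Fin n) (h0 : 0 < n) :
    (Polynomial.aeval (jordanJ n R) f) i ⟨0, h0⟩ = f.coeff i := by
  rw [Polynomial.aeval_def, Polynomial.eval₂_eq_sum, Polynomial.sum_def]
  rw [Matrix.sum_apply]
  have : ∀ e ∈ f.support,
      (algebraMap R (Matrix (Fin n) (Fin n) R) (f.coeff e) * jordanJ n R ^ e) i ⟨0, h0⟩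
      = if (i : ℕ) = e then f.coeff e else 0 := by
    intro e _
    rw [← Algebra.smul_def, Matrix.smul_apply, jordanJ_pow_apply, smul_eq_mul]
    simp
  rw [Finset.sum_congr rfl this, Finset.sum_ite_eq f.support (i : ℕ) (fun e => f.coeff e)]
  split
  · rfl
  · next h => exact (Polynomial.notMem_support_iff.mp h).symm

lemma trinomial_coeffs (R : Type) [CommRing R] (b : ℕ) :
    ((1 + X + X ^ 2 : R[X]) ^ b).coeff 0 = 1 ∧
    ((1 + X + X ^ 2 : R[X]) ^ b).coeff 1 = (b : R) ∧
    ((1 + X + X ^ 2 : R[X]) ^ b).coeff 2 = (b : R) + (b.choose 2 : R) := by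
  have e0 : (1 + X + X ^ 2 : R[X]).coeff 0 = 1 := by simp
  have e1 : (1 + X + X ^ 2 : R[X]).coeff 1 = 1 := by
    simp [Polynomial.coeff_one, Polynomial.coeff_X]
  have e2 : (1 + X + X ^ 2 : R[X]).coeff 2 = 1 := by
    simp [Polynomial.coeff_one, Polynomial.coeff_X]
  induction b with
  | zero => simp [Polynomial.coeff_one]
  | succ b ih =>
    obtain ⟨h0, h1, h2⟩ := ih
    have hch : ((b + 1).choose 2 : ℕ) = b.choose 2 + b := by
      rw [show (2:ℕ) = 1 + 1 from rfl, Nat.choose_succ_succ, Nat.choose_one_right]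
      show b + b.choose 2 = b.choose 2 + b
      omega
    rw [pow_succ]
    refine ⟨?_, ?_, ?_⟩
    · rw [Polynomial.mul_coeff_zero, h0, e0, one_mul]
    · rw [Polynomial.coeff_mul, Finset.Nat.sum_antidiagonal_eq_sum_range_succ_mk,
        Finset.sum_range_succ, Finset.sum_range_succ, Finset.sum_range_zero]
      simp only [Nat.sub_self, Nat.sub_zero]
      rw [h0, h1, e0, e1]
      push_cast
      ring
    · rw [Polynomial.coeff_mul, Finset.Nat.sum_antidiagonal_eq_sum_range_succ_mk,
        Finset.sum_range_succ, Finset.sum_range_succ, Finset.sum_range_succ,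
        Finset.sum_range_zero]
      simp only [Nat.sub_self, Nat.sub_zero, show (2:ℕ) - 1 = 1 from rfl]
      rw [h0, h1, h2, e0, e1, e2, hch]
      push_cast
      ring

open SemidirectProduct Multiplicative in
lemma inl_range_le_closure (n p : ℕ) [Fact p.Prime] (h0 : 0 < n)
    (M : GL (Fin n) (ZMod p))
    (hM1 : ∀ k : Fin n,
      ((((M : Matrix (Fin n) (Fin n) (ZMod p)) - 1) ^ (k : ℕ)).mulVec
        (Pi.single ⟨0, h0⟩ 1)) k = 1)
    (hM2 : ∀ k j : Fin n, (j : ℕ) < (k : ℕ) →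
      ((((M : Matrix (Fin n) (Fin n) (ZMod p)) - 1) ^ (k : ℕ)).mulVec
        (Pi.single ⟨0, h0⟩ 1)) j = 0) :
    (SemidirectProduct.inl :
      Multiplicative (Fin n → ZMod p) →* Multiplicative (Fin n → ZMod p) ⋊[glPhi n (ZMod p)]
        GL (Fin n) (ZMod p)).range ≤
    Subgroup.closure
        {SemidirectProduct.inl (Multiplicative.ofAdd (Pi.single (⟨0, h0⟩ : Fin n) 1)),
          SemidirectProduct.inr (φ := glPhi n (ZMod p)) M} := by
  set e0 : Fin n → ZMod p := Pi.single (⟨0, h0⟩ : Fin n) 1 with he0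
  set A := Subgroup.closure
      {SemidirectProduct.inl (Multiplicative.ofAdd e0),
        SemidirectProduct.inr (φ := glPhi n (ZMod p)) M} with hA
  have hmem_e0 : SemidirectProduct.inl (φ := glPhi n (ZMod p)) (Multiplicative.ofAdd e0) ∈ A :=
    Subgroup.subset_closure (Set.mem_insert _ _)
  have hmemM : SemidirectProduct.inr (φ := glPhi n (ZMod p)) M ∈ A :=
    Subgroup.subset_closure (Set.mem_insert_of_mem _ rfl)
  have hadd : ∀ u v : Fin n → ZMod p,
      SemidirectProduct.inl (φ := glPhi n (ZMod p)) (ofAdd u) ∈ A →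
      SemidirectProduct.inl (φ := glPhi n (ZMod p)) (ofAdd v) ∈ A →
      SemidirectProduct.inl (φ := glPhi n (ZMod p)) (ofAdd (u + v)) ∈ A := by
    intro u v hu hv
    have h : SemidirectProduct.inl (φ := glPhi n (ZMod p)) (ofAdd (u + v)) =
        SemidirectProduct.inl (ofAdd u) * SemidirectProduct.inl (ofAdd v) := by
      rw [← _root_.map_mul]
      rfl
    rw [h]
    exact mul_mem hu hv
  have hneg : ∀ v : Fin n → ZMod p,
      SemidirectProduct.inl (φ := glPhi n (ZMod p)) (ofAdd v) ∈ A →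
      SemidirectProduct.inl (φ := glPhi n (ZMod p)) (ofAdd (-v)) ∈ A := by
    intro v hv
    have h : SemidirectProduct.inl (φ := glPhi n (ZMod p)) (ofAdd (-v)) =
        (SemidirectProduct.inl (φ := glPhi n (ZMod p)) (ofAdd v))⁻¹ := by
      rw [← _root_.map_inv]
      rfl
    rw [h]
    exact inv_mem hv
  have hsub : ∀ u v : Fin n → ZMod p,
      SemidirectProduct.inl (φ := glPhi n (ZMod p)) (ofAdd u) ∈ A →
      SemidirectProduct.inl (φ := glPhi n (ZMod p)) (ofAdd v) ∈ A →
      SemidirectProduct.inl (φ := glPhi n (ZMod p)) (ofAdd (u - v)) ∈ A := by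
    intro u v hu hv
    rw [sub_eq_add_neg]
    exact hadd _ _ hu (hneg _ hv)
  have hsmul : ∀ (c : ZMod p) (v : Fin n → ZMod p),
      SemidirectProduct.inl (φ := glPhi n (ZMod p)) (ofAdd v) ∈ A →
      SemidirectProduct.inl (φ := glPhi n (ZMod p)) (ofAdd (c • v)) ∈ A := by
    intro c v hv
    have hcv : c • v = (ZMod.val c) • v := by
      funext j
      simp only [Pi.smul_apply, nsmul_eq_mul, smul_eq_mul]
      rw [ZMod.natCast_val, ZMod.cast_id]
    have h : SemidirectProduct.inl (φ := glPhi n (ZMod p)) (ofAdd (c • v)) =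
        (SemidirectProduct.inl (φ := glPhi n (ZMod p)) (ofAdd v)) ^ (ZMod.val c) := by
      rw [hcv, ofAdd_nsmul, map_pow]
    rw [h]
    exact pow_mem hv _
  have hmulM : ∀ v : Fin n → ZMod p,
      SemidirectProduct.inl (φ := glPhi n (ZMod p)) (ofAdd v) ∈ A →
      SemidirectProduct.inl (φ := glPhi n (ZMod p))
        (ofAdd ((M : Matrix (Fin n) (Fin n) (ZMod p)).mulVec v)) ∈ A := by
    intro v hv
    have h : SemidirectProduct.inl (φ := glPhi n (ZMod p))
        (ofAdd ((M : Matrix (Fin n) (Fin n) (ZMod p)).mulVec v)) =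
        SemidirectProduct.inr (φ := glPhi n (ZMod p)) M *
          SemidirectProduct.inl (ofAdd v) * SemidirectProduct.inr M⁻¹ := by
      rw [← SemidirectProduct.inl_aut]
      rfl
    rw [h]
    refine mul_mem (mul_mem hmemM hv) ?_
    rw [_root_.map_inv]
    exact inv_mem hmemM
  have hmulN : ∀ v : Fin n → ZMod p,
      SemidirectProduct.inl (φ := glPhi n (ZMod p)) (ofAdd v) ∈ A →
      SemidirectProduct.inl (φ := glPhi n (ZMod p))
        (ofAdd (((M : Matrix (Fin n) (Fin n) (ZMod p)) - 1).mulVec v)) ∈ A := by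
    intro v hv
    have h : ((M : Matrix (Fin n) (Fin n) (ZMod p)) - 1).mulVec v =
        (M : Matrix (Fin n) (Fin n) (ZMod p)).mulVec v - v := by
      rw [Matrix.sub_mulVec, Matrix.one_mulVec]
    rw [h]
    exact hsub _ _ (hmulM v hv) hv
  have ht : ∀ k : ℕ,
      SemidirectProduct.inl (φ := glPhi n (ZMod p))
        (ofAdd ((((M : Matrix (Fin n) (Fin n) (ZMod p)) - 1) ^ k).mulVec e0)) ∈ A := by
    intro k
    induction k with
    | zero =>
      rw [pow_zero, Matrix.one_mulVec]
      exact hmem_e0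
    | succ k ih =>
      rw [pow_succ', ← Matrix.mulVec_mulVec]
      exact hmulN _ ih
  have key : ∀ m : ℕ, ∀ v : Fin n → ZMod p, (∀ j : Fin n, (j : ℕ) < n - m → v j = 0) →
      SemidirectProduct.inl (φ := glPhi n (ZMod p)) (ofAdd v) ∈ A := by
    intro m
    induction m with
    | zero =>
      intro v hv
      have h : v = 0 := funext fun j => hv j (by omega)
      rw [h, ofAdd_zero, _root_.map_one]
      exact one_mem A
    | succ m ih =>
      intro v hv
      by_cases hnm : n ≤ m
      · exact ih v fun j hj => absurd hj (by omega)
      · set k : Fin n := ⟨n - (m + 1), by omega⟩ with hk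
        have hkv : (k : ℕ) = n - (m + 1) := rfl
        have hr : SemidirectProduct.inl (φ := glPhi n (ZMod p))
            (ofAdd ((((M : Matrix (Fin n) (Fin n) (ZMod p)) - 1) ^ (k : ℕ)).mulVec e0
              - Pi.single k 1)) ∈ A := by
          apply ih
          intro j hj
          simp only [Pi.sub_apply]
          by_cases hjk : j = k
          · subst hjk
            have h1 := hM1 k
            rw [hkv] at h1
            rw [h1, Pi.single_eq_same]
            ring
          · have hlt : (j : ℕ) < (k : ℕ) := by
              have hne := Fin.val_ne_of_ne hjk
              omega
            have h2 := hM2 k j hlt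
            rw [hkv] at h2
            rw [h2, Pi.single_eq_of_ne hjk]
            ring
        have hsingle : SemidirectProduct.inl (φ := glPhi n (ZMod p))
            (ofAdd (Pi.single k (1 : ZMod p))) ∈ A := by
          have h : Pi.single k (1 : ZMod p) =
              (((M : Matrix (Fin n) (Fin n) (ZMod p)) - 1) ^ (k : ℕ)).mulVec e0 -
              ((((M : Matrix (Fin n) (Fin n) (ZMod p)) - 1) ^ (k : ℕ)).mulVec e0
                - Pi.single k 1) :=
            (sub_sub_cancel _ (Pi.single k 1)).symm
          rw [h]
          exact hsub _ _ (ht (k : ℕ)) hr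
        have hsingle' : SemidirectProduct.inl (φ := glPhi n (ZMod p))
            (ofAdd (Pi.single k (v k))) ∈ A := by
          have h : Pi.single k (v k) = (v k) • (Pi.single k 1 : Fin n → ZMod p) := by
            funext j
            by_cases hjk : j = k
            · subst hjk
              simp
            · simp [Pi.single_eq_of_ne hjk]
          rw [h]
          exact hsmul _ _ hsingle
        have hrest : SemidirectProduct.inl (φ := glPhi n (ZMod p))
            (ofAdd (v - Pi.single k (v k))) ∈ A := by
          apply ih
          intro j hj
          simp only [Pi.sub_apply]
          by_cases hjk : j = k
          · subst hjk
            rw [Pi.single_eq_same]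
            ring
          · have hne := Fin.val_ne_of_ne hjk
            have hj' : (j : ℕ) < n - (m + 1) := by omega
            rw [hv j hj', Pi.single_eq_of_ne hjk]
            ring
        have h : v = (v - Pi.single k (v k)) + Pi.single k (v k) := by
          rw [sub_add_cancel]
        rw [h]
        exact hadd _ _ hrest hsingle'
  rintro x ⟨v, rfl⟩
  exact key n v.toAdd fun j hj => absurd hj (by omega)

lemma jordanJ_pow_mulVec_single (n : ℕ) (R : Type) [Ring R] (h0 : 0 < n) (m : ℕ) (j : Fin n) :
    ((jordanJ n R ^ m).mulVec (Pi.single (⟨0, h0⟩ : Fin n) 1)) j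
      = if (j : ℕ) = m then 1 else 0 := by
  simp [jordanJ_pow_apply]

/-- In the semidirect product `V ⋊ GL n (ZMod p)` (with `V = (ZMod p)ⁿ`), the subgroups
`A = ⟨inl e₁, inr P⟩` and `B = ⟨inl e₁, inr Q⟩`, where `P = 1 + J` and `Q = 1 + J + J²`,
intersect exactly in the embedded copy of `V`. -/
theorem inf_eq_inl_range (n p : ℕ) (hn : 3 ≤ n) (hp : p.Prime) (hodd : Odd p)
    (hpn : n < p) (P Q : GL (Fin n) (ZMod p))
    (hP : (P : Matrix (Fin n) (Fin n) (ZMod p)) = 1 + jordanJ n (ZMod p))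
    (hQ : (Q : Matrix (Fin n) (Fin n) (ZMod p)) =
      1 + jordanJ n (ZMod p) + jordanJ n (ZMod p) ^ 2) :
    Subgroup.closure
        {SemidirectProduct.inl
            (Multiplicative.ofAdd (Pi.single (⟨0, by omega⟩ : Fin n) 1)),
          SemidirectProduct.inr (φ := glPhi n (ZMod p)) P} ⊓
      Subgroup.closure
        {SemidirectProduct.inl
            (Multiplicative.ofAdd (Pi.single (⟨0, by omega⟩ : Fin n) 1)),
          SemidirectProduct.inr (φ := glPhi n (ZMod p)) Q} =
    (SemidirectProduct.inl :
      Multiplicative (Fin n → ZMod p) →* Multiplicative (Fin n → ZMod p) ⋊[glPhi n (ZMod p)]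
        GL (Fin n) (ZMod p)).range := by
  haveI : Fact p.Prime := ⟨hp⟩
  have h0 : 0 < n := by omega
  have hJn : ∀ m : ℕ, n ≤ m → jordanJ n (ZMod p) ^ m = 0 :=
    fun m hm => jordanJ_pow_eq_zero n (ZMod p) m hm
  have hPaev : (P : Matrix (Fin n) (Fin n) (ZMod p)) = aeval (jordanJ n (ZMod p)) (1 + X : (ZMod p)[X]) := by
    rw [hP]; simp
  have hQaev : (Q : Matrix (Fin n) (Fin n) (ZMod p))
      = aeval (jordanJ n (ZMod p)) (1 + X + X ^ 2 : (ZMod p)[X]) := by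
    rw [hQ]; simp
  have hPpow : ∀ a : ℕ, (P : Matrix (Fin n) (Fin n) (ZMod p)) ^ a
      = aeval (jordanJ n (ZMod p)) ((1 + X : (ZMod p)[X]) ^ a) := by
    intro a; rw [hPaev, map_pow]
  have hQpow : ∀ b : ℕ, (Q : Matrix (Fin n) (Fin n) (ZMod p)) ^ b
      = aeval (jordanJ n (ZMod p)) ((1 + X + X ^ 2 : (ZMod p)[X]) ^ b) := by
    intro b; rw [hQaev, map_pow]
  have hPp : P ^ p = 1 := by
    apply Units.ext
    rw [Units.val_pow_eq_pow_val, hPpow p, add_pow_char, one_pow, map_add, _root_.map_one,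
      map_pow, aeval_X, hJn p (le_of_lt hpn), add_zero, Units.val_one]
  have hQp : Q ^ p = 1 := by
    apply Units.ext
    rw [Units.val_pow_eq_pow_val, hQpow p, add_pow_char, add_pow_char, one_pow,
      map_add, map_add, _root_.map_one, map_pow, aeval_X, map_pow, map_pow, aeval_X,
      hJn p (le_of_lt hpn), ← pow_mul, hJn (2 * p) (by omega), add_zero, add_zero,
      Units.val_one]
  have hzred : ∀ (g : GL (Fin n) (ZMod p)), g ^ p = 1 → ∀ i : ℤ,
      ∃ a : ℕ, a < p ∧ g ^ i = g ^ a := by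
    intro g hg i
    have hp0 : (0 : ℤ) < (p : ℤ) := by exact_mod_cast hp.pos
    have h1 : 0 ≤ i % (p : ℤ) := Int.emod_nonneg i (by omega)
    have h2 : i % (p : ℤ) < (p : ℤ) := Int.emod_lt_of_pos i hp0
    refine ⟨(i % (p : ℤ)).toNat, by omega, ?_⟩
    conv_lhs => rw [← Int.mul_ediv_add_emod i (p : ℤ)]
    rw [_root_.zpow_add, _root_.zpow_mul, zpow_natCast, hg, _root_.one_zpow, one_mul,
      ← Int.toNat_of_nonneg h1, zpow_natCast, Int.toNat_natCast]
  have hkey : ∀ g : GL (Fin n) (ZMod p),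
      g ∈ Subgroup.zpowers P → g ∈ Subgroup.zpowers Q → g = 1 := by
    intro g hgP hgQ
    obtain ⟨i, hi⟩ := Subgroup.mem_zpowers_iff.mp hgP
    obtain ⟨j, hj⟩ := Subgroup.mem_zpowers_iff.mp hgQ
    obtain ⟨a, ha, hPa⟩ := hzred P hPp i
    obtain ⟨b, hb, hQb⟩ := hzred Q hQp j
    have hab : P ^ a = Q ^ b := by rw [← hPa, ← hQb, hi, hj]
    have hvals : (P : Matrix (Fin n) (Fin n) (ZMod p)) ^ a
        = (Q : Matrix (Fin n) (Fin n) (ZMod p)) ^ b := by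
      rw [← Units.val_pow_eq_pow_val, ← Units.val_pow_eq_pow_val, hab]
    rw [hPpow, hQpow] at hvals
    have coefEq : ∀ k : ℕ, k < n →
        ((1 + X : (ZMod p)[X]) ^ a).coeff k = ((1 + X + X ^ 2 : (ZMod p)[X]) ^ b).coeff k := by
      intro k hk
      have h := congrArg
        (fun m : Matrix (Fin n) (Fin n) (ZMod p) => m ⟨k, hk⟩ ⟨0, h0⟩) hvals
      rw [aeval_jordanJ_apply, aeval_jordanJ_apply] at h
      exact h
    obtain ⟨hq0, hq1, hq2⟩ := trinomial_coeffs (ZMod p) b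
    have e1 : (a : ZMod p) = (b : ZMod p) := by
      have h := coefEq 1 (by omega)
      rw [Polynomial.coeff_one_add_X_pow, Nat.choose_one_right, hq1] at h
      exact h
    have hab' : a = b := by
      have h := congrArg ZMod.val e1
      rwa [ZMod.val_cast_of_lt ha, ZMod.val_cast_of_lt hb] at h
    subst hab'
    have e2 : ((a.choose 2 : ZMod p)) = (a : ZMod p) + (a.choose 2 : ZMod p) := by
      have h := coefEq 2 (by omega)
      rw [Polynomial.coeff_one_add_X_pow, hq2] at h
      exact h
    have ea0 : (a : ZMod p) = 0 := by linear_combination -e2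
    have ha0 : a = 0 := by
      have h := congrArg ZMod.val ea0
      rwa [ZMod.val_cast_of_lt ha, ZMod.val_zero] at h
    rw [← hi, hPa, ha0, pow_zero]
  apply le_antisymm
  · have hcl : ∀ (M : GL (Fin n) (ZMod p)),
        Subgroup.closure
          {SemidirectProduct.inl
              (Multiplicative.ofAdd (Pi.single (⟨0, h0⟩ : Fin n) 1)),
            SemidirectProduct.inr (φ := glPhi n (ZMod p)) M} ≤
        Subgroup.comap (SemidirectProduct.rightHom) (Subgroup.zpowers M) := by
      intro M
      rw [Subgroup.closure_le]
      rintro y hy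
      simp only [Set.mem_insert_iff, Set.mem_singleton_iff] at hy
      rcases hy with rfl | rfl
      · simp only [SetLike.mem_coe, Subgroup.mem_comap, SemidirectProduct.rightHom_inl]
        exact one_mem _
      · simp only [SetLike.mem_coe, Subgroup.mem_comap, SemidirectProduct.rightHom_inr]
        exact Subgroup.mem_zpowers M
    intro x hx
    obtain ⟨hxA, hxB⟩ := hx
    have h1 := hcl P hxA
    have h2 := hcl Q hxB
    rw [Subgroup.mem_comap] at h1 h2
    rw [SemidirectProduct.range_inl_eq_ker_rightHom, MonoidHom.mem_ker]
    exact hkey _ h1 h2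
  · have hPsub : (P : Matrix (Fin n) (Fin n) (ZMod p)) - 1 = jordanJ n (ZMod p) := by
      rw [hP]; exact add_sub_cancel_left 1 _
    have hQsub : (Q : Matrix (Fin n) (Fin n) (ZMod p)) - 1
        = aeval (jordanJ n (ZMod p)) (X + X ^ 2 : (ZMod p)[X]) := by
      rw [hQ, add_assoc, add_sub_cancel_left]; simp
    have hXX : ∀ (k d : ℕ), ((X + X ^ 2 : (ZMod p)[X]) ^ k).coeff d
        = if k ≤ d then ((1 + X : (ZMod p)[X]) ^ k).coeff (d - k) else 0 := by
      intro k d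
      have hfac : (X + X ^ 2 : (ZMod p)[X]) ^ k = (1 + X) ^ k * X ^ k := by
        rw [← mul_pow]; ring_nf
      rw [hfac, Polynomial.coeff_mul_X_pow']
    have hQt : ∀ (k j : Fin n),
        ((((Q : Matrix (Fin n) (Fin n) (ZMod p)) - 1) ^ (k : ℕ)).mulVec
          (Pi.single (⟨0, h0⟩ : Fin n) 1)) j
        = ((X + X ^ 2 : (ZMod p)[X]) ^ (k : ℕ)).coeff j := by
      intro k j
      rw [hQsub, ← map_pow]
      simp only [Matrix.mulVec_single]
      rw [MulOpposite.op_one, one_smul, Matrix.col_apply, aeval_jordanJ_apply]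
    apply le_inf
    · apply inl_range_le_closure n p h0 P
      · intro k
        rw [hPsub, jordanJ_pow_mulVec_single n (ZMod p) h0]
        simp
      · intro k j hjk
        rw [hPsub, jordanJ_pow_mulVec_single n (ZMod p) h0]
        rw [if_neg (by omega)]
    · apply inl_range_le_closure n p h0 Q
      · intro k
        rw [hQt, hXX, if_pos le_rfl, Nat.sub_self, Polynomial.coeff_one_add_X_pow,
          Nat.choose_zero_right, Nat.cast_one]
      · intro k j hjk
        rw [hQt, hXX, if_neg (by omega)]
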